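/- Let n ≥ 1. For every Σ ∈ Sp(2n), every w ∈ ℝ^{2n} and every r ∈ ℝ, the matrix Γ = Γ°(Σ, w, r) is invertible and satisfies both ΓᵀζΓ = ζ and ΓᵀηΓ = η. -/

import Mathlib

/-!
Split `ℝ^{2n+2} = ℝ^{2n} ⊕ ℝ²`. Then `ζ = diag(ζ°, J)`, `η = diag(0, e₂e₂ᵀ)`, and `Γ°(Σ, w, r)` has
diagonal blocks `Σ`, `D = [[1, 2r], [0, 1]]` and off-diagonal blocks `w e₂ᵀ`, `e₁ (wᵀζ°Σ)`.
Blockwise, the off-diagonal blocks of `ΓᵀζΓ` cancel because `ζ°` is skew, so that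
`Σᵀζ°w = -(wᵀζ°Σ)ᵀ`; the lower right block is `(wᵀζ°w) e₂e₂ᵀ + DᵀJD = J` by skewness again and
`det D = 1`; the upper left block is `Σᵀζ°Σ = ζ°` since `J₁₁ = 0`. As `ζ² = -1`, the identity
`ΓᵀζΓ = ζ` makes `Γ` invertible. For `η` only the last row `e₂ᵀ` of `Γ` matters.
-/

open Matrix

noncomputable section

/-- `η`: the `(2n+2)×(2n+2)` matrix whose only nonzero entry is a `1`
in the bottom-right corner. -/
def etaM (n : ℕ) : Matrix (Fin (2*n+2)) (Fin (2*n+2)) ℝ :=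
  Matrix.of fun i j => if i.val = 2*n+1 ∧ j.val = 2*n+1 then 1 else 0

/-- `ζ°`: block-diagonal with `n` copies of `[[0,1],[-1,0]]`. -/
def zetaC (n : ℕ) : Matrix (Fin (2*n)) (Fin (2*n)) ℝ :=
  Matrix.of fun i j =>
    if j.val = i.val + 1 ∧ i.val % 2 = 0 then 1
    else if i.val = j.val + 1 ∧ j.val % 2 = 0 then -1 else 0

/-- `ζ = diag(ζ°, [[0,1],[-1,0]])`: block-diagonal with `n+1` copies of `[[0,1],[-1,0]]`. -/
def zetaBig (n : ℕ) : Matrix (Fin (2*n+2)) (Fin (2*n+2)) ℝ :=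
  Matrix.of fun i j =>
    if j.val = i.val + 1 ∧ i.val % 2 = 0 then 1
    else if i.val = j.val + 1 ∧ j.val % 2 = 0 then -1 else 0

/-- `Λ°(Ω,u)`: the block matrix `[[Ω, u],[0, 1]]` (blocks of sizes `2n+1` and `1`). -/
def LamO (n : ℕ) (Ω : Matrix (Fin (2*n+1)) (Fin (2*n+1)) ℝ) (u : Fin (2*n+1) → ℝ) :
    Matrix (Fin (2*n+2)) (Fin (2*n+2)) ℝ :=
  Matrix.of fun i j =>
    if hi : i.val < 2*n+1 then
      if hj : j.val < 2*n+1 then Ω ⟨i.val, hi⟩ ⟨j.val, hj⟩ else u ⟨i.val, hi⟩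
    else
      if j.val < 2*n+1 then 0 else 1

/-- `Δ(ε) = diag(1,…,1,ε)`. -/
def DeltaM (n : ℕ) (ε : ℝ) : Matrix (Fin (2*n+2)) (Fin (2*n+2)) ℝ :=
  Matrix.diagonal fun i => if i.val < 2*n+1 then 1 else ε

/-- `Γ°(Σ,w,r)`: the block matrix (blocks of sizes `2n`, `1`, `1`)
`[[Σ, 0, w],[wᵀζ°Σ, 1, 2r],[0, 0, 1]]`. -/
def GamO (n : ℕ) (S : Matrix (Fin (2*n)) (Fin (2*n)) ℝ) (w : Fin (2*n) → ℝ) (r : ℝ) :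
    Matrix (Fin (2*n+2)) (Fin (2*n+2)) ℝ :=
  Matrix.of fun i j =>
    if hi : i.val < 2*n then
      if hj : j.val < 2*n then S ⟨i.val, hi⟩ ⟨j.val, hj⟩
      else if j.val = 2*n then 0 else w ⟨i.val, hi⟩
    else if i.val = 2*n then
      if hj : j.val < 2*n then Matrix.vecMul (Matrix.vecMul w (zetaC n)) S ⟨j.val, hj⟩
      else if j.val = 2*n then 1 else 2*r
    else
      if j.val = 2*n+1 then 1 else 0

/-- `Υ(w,r) = Γ°(1_{2n}, w, r)`: Weyl–Heisenberg element in unpolarized coordinates. -/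
def Ups (n : ℕ) (w : Fin (2*n) → ℝ) (r : ℝ) : Matrix (Fin (2*n+2)) (Fin (2*n+2)) ℝ :=
  GamO n 1 w r

/-- The Lie algebra generator `W_a = [[0,0,e_a],[e_aᵀζ°,0,0],[0,0,0]]`. -/
def Wmat (n : ℕ) (a : Fin (2*n)) : Matrix (Fin (2*n+2)) (Fin (2*n+2)) ℝ :=
  Matrix.of fun i j =>
    if i.val < 2*n ∧ j.val = 2*n+1 then (if i.val = a.val then 1 else 0)
    else if _hi : i.val = 2*n then
      (if hj : j.val < 2*n then zetaC n a ⟨j.val, hj⟩ else 0)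
    else 0

/-- The central generator `R`: only nonzero entry a `2` in position `(2n+1, 2n+2)` (1-indexed). -/
def Rmat (n : ℕ) : Matrix (Fin (2*n+2)) (Fin (2*n+2)) ℝ :=
  Matrix.of fun i j => if i.val = 2*n ∧ j.val = 2*n+1 then 2 else 0

/-- Time reversal `T = diag(1_{2n}, -1, -1)`. -/
def Tmat (n : ℕ) : Matrix (Fin (2*n+2)) (Fin (2*n+2)) ℝ :=
  Matrix.diagonal fun i => if i.val < 2*n then 1 else -1

/-- `Σ(R)`: the `2n×2n` matrix with `Σ(R)_{2i-1,2j-1} = Σ(R)_{2i,2j} = R_{ij}`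
(1-indexed) and all other entries zero. -/
def SigmaR (n : ℕ) (R : Matrix (Fin n) (Fin n) ℝ) : Matrix (Fin (2*n)) (Fin (2*n)) ℝ :=
  Matrix.of fun a b =>
    if a.val % 2 = b.val % 2 then
      R ⟨a.val / 2, by have := a.isLt; omega⟩ ⟨b.val / 2, by have := b.isLt; omega⟩
    else 0

/-- `ι(v) ∈ ℝ^{2n}` with `ι(v)_{2i-1} = v_i` and `ι(v)_{2i} = 0` (1-indexed). -/
def iotaV (n : ℕ) (v : Fin n → ℝ) : Fin (2*n) → ℝ :=
  fun a => if a.val % 2 = 0 then v ⟨a.val / 2, by have := a.isLt; omega⟩ else 0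

/-- The position-momentum part `y` of a point `z = (y, ε, t)` of extended phase space. -/
def yPart (n : ℕ) (z : Fin (2*n+2) → ℝ) : Fin (2*n) → ℝ :=
  fun a => z ⟨a.val, by have := a.isLt; omega⟩

/-- The time coordinate `t` of a point `z = (y, ε, t)` of extended phase space. -/
def tCoord (n : ℕ) (z : Fin (2*n+2) → ℝ) : ℝ := z ⟨2*n+1, by omega⟩

/-- The map `ρ(y, ε, t) = (y + φ(t), ε + H(y,t), t + c)` on extended phase space. -/
def rhoMap (n : ℕ) (φ : ℝ → Fin (2*n) → ℝ) (H : (Fin (2*n) → ℝ) → ℝ → ℝ) (c : ℝ)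
    (z : Fin (2*n+2) → ℝ) : Fin (2*n+2) → ℝ :=
  fun i =>
    if hi : i.val < 2*n then z i + φ (tCoord n z) ⟨i.val, hi⟩
    else if i.val = 2*n then z i + H (yPart n z) (tCoord n z)
    else z i + c

/-- The Jacobian matrix (in the standard coordinates) of a map `f : ℝ^N → ℝ^N` at `z`. -/
def jacM (N : ℕ) (f : (Fin N → ℝ) → (Fin N → ℝ)) (z : Fin N → ℝ) :
    Matrix (Fin N) (Fin N) ℝ :=
  Matrix.of fun i j => fderiv ℝ f z (Pi.single j 1) i

namespace Matrix

variable {R m : Type*} [CommRing R] [Fintype m]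

theorem dotProduct_mulVec_self_eq_zero_of_transpose_eq_neg [NoZeroDivisors R] [CharZero R]
    {Z : Matrix m m R} (hZ : Zᵀ = -Z) (w : m → R) : w ⬝ᵥ Z *ᵥ w = 0 := by
  rw [← CharZero.eq_neg_self_iff]
  calc w ⬝ᵥ Z *ᵥ w = (Zᵀ *ᵥ w) ⬝ᵥ w := by rw [dotProduct_mulVec, mulVec_transpose]
    _ = -(w ⬝ᵥ Z *ᵥ w) := by rw [hZ, neg_mulVec, neg_dotProduct, dotProduct_comm]

theorem transpose_reindex_mul_mul_eq_iff {κ : Type*} [Fintype κ] (e : m ≃ κ)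
    (M Z : Matrix m m R) :
    (reindex e e M)ᵀ * reindex e e Z * reindex e e M = reindex e e Z ↔ Mᵀ * Z * M = Z := by
  rw [← (reindex e e).injective.eq_iff]
  simp only [reindex_apply, transpose_submatrix, submatrix_mul_equiv]

theorem isUnit_of_transpose_mul_mul_eq [DecidableEq m] {Z M : Matrix m m R} (hZ : IsUnit Z)
    (h : Mᵀ * Z * M = Z) : IsUnit M := by
  rw [isUnit_iff_isUnit_det] at hZ ⊢
  rw [← h, det_mul] at hZ
  exact isUnit_of_mul_isUnit_right hZ

end Matrix

/-! Blocks of `Γ°(Σ, w, r)`, `ζ` and `η` along the splitting `m ⊕ Fin 2`, with `m = Fin (2n)`. -/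

section Blocks

variable {R m : Type*} [CommRing R] [Fintype m]

def zetaBlock (Z : Matrix m m R) : Matrix (m ⊕ Fin 2) (m ⊕ Fin 2) R :=
  fromBlocks Z 0 0 !![0, 1; -1, 0]

def etaBlock : Matrix (m ⊕ Fin 2) (m ⊕ Fin 2) R :=
  fromBlocks 0 0 0 !![0, 0; 0, 1]

def gammaBlock (Z S : Matrix m m R) (w : m → R) (r : R) : Matrix (m ⊕ Fin 2) (m ⊕ Fin 2) R :=
  fromBlocks S (vecMulVec w (Pi.single 1 1)) (vecMulVec (Pi.single 0 1) (w ᵥ* Z ᵥ* S))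
    !![1, 2 * r; 0, 1]

theorem transpose_gammaBlock_mul_zetaBlock_mul [NoZeroDivisors R] [CharZero R]
    {Z S : Matrix m m R} (hZ : Zᵀ = -Z) (hS : Sᵀ * Z * S = Z) (w : m → R) (r : R) :
    (gammaBlock Z S w r)ᵀ * zetaBlock Z * gammaBlock Z S w r = zetaBlock Z := by
  have hcross : (Sᵀ * Z) *ᵥ w = -(w ᵥ* Z ᵥ* S) := by
    rw [← vecMul_transpose, transpose_mul, transpose_transpose, hZ, neg_mul, vecMul_neg,
      vecMul_vecMul]
  have hquad : (w ᵥ* Z) ⬝ᵥ w = 0 := by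
    rw [← dotProduct_mulVec]; exact dotProduct_mulVec_self_eq_zero_of_transpose_eq_neg hZ w
  rw [gammaBlock, zetaBlock, fromBlocks_transpose, fromBlocks_multiply, fromBlocks_multiply]
  simp only [Matrix.mul_zero, add_zero, zero_add, transpose_vecMulVec,
    mul_vecMulVec, vecMulVec_mul, vecMulVec_mulVec, hcross, hS, hquad]
  congr 1
  · ext i j; simp
  · ext i j; fin_cases j <;> simp [vecMulVec_apply]
  · ext i j; fin_cases i <;> simp [vecMulVec_apply, mul_apply, Fin.sum_univ_two]
  · ext i j; fin_cases i <;> fin_cases j <;> simp [mul_apply, Fin.sum_univ_two]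

theorem transpose_gammaBlock_mul_etaBlock_mul (Z S : Matrix m m R) (w : m → R) (r : R) :
    (gammaBlock Z S w r)ᵀ * etaBlock * gammaBlock Z S w r = etaBlock := by
  rw [gammaBlock, etaBlock, fromBlocks_transpose, fromBlocks_multiply, fromBlocks_multiply]
  simp only [Matrix.mul_zero, Matrix.zero_mul, add_zero, zero_add, transpose_vecMulVec,
    mul_vecMulVec, vecMulVec_mul]
  congr 1
  · ext i j; simp [vecMulVec_apply]
  · ext i j; fin_cases j <;> simp [vecMulVec_apply]
  · ext i j; fin_cases i <;> simp [vecMulVec_apply, mul_apply, Fin.sum_univ_two]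
  · ext i j; fin_cases i <;> fin_cases j <;> simp [mul_apply, Fin.sum_univ_two]

theorem zetaBlock_mul_self [DecidableEq m] {Z : Matrix m m R} (hZ : Z * Z = -1) :
    zetaBlock Z * zetaBlock Z = -1 := by
  rw [zetaBlock, fromBlocks_multiply, ← fromBlocks_one, fromBlocks_neg]
  simp [hZ, one_fin_two]

end Blocks

theorem reindex_GamO (n : ℕ) (S : Matrix (Fin (2*n)) (Fin (2*n)) ℝ) (w : Fin (2*n) → ℝ) (r : ℝ) :
    reindex finSumFinEquiv.symm finSumFinEquiv.symm (GamO n S w r) =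
      gammaBlock (zetaC n) S w r := by
  ext (i | i) (j | j)
  · simp [GamO, gammaBlock]
  · fin_cases j <;> simp [GamO, gammaBlock, vecMulVec_apply]
  · fin_cases i <;> simp [GamO, gammaBlock, vecMulVec_apply]; omega
  · fin_cases i <;> fin_cases j <;> simp [GamO, gammaBlock]

theorem reindex_zetaBig (n : ℕ) :
    reindex finSumFinEquiv.symm finSumFinEquiv.symm (zetaBig n) = zetaBlock (zetaC n) := by
  ext (i | i) (j | j)
  · simp [zetaBig, zetaC, zetaBlock]
  · fin_cases j <;> simp [zetaBig, zetaBlock] <;> grind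
  · fin_cases i <;> simp [zetaBig, zetaBlock] <;> grind
  · fin_cases i <;> fin_cases j <;> simp [zetaBig, zetaBlock]

theorem reindex_etaM (n : ℕ) :
    reindex finSumFinEquiv.symm finSumFinEquiv.symm (etaM n) = etaBlock := by
  ext (i | i) (j | j)
  · simp [etaM, etaBlock]; omega
  · fin_cases j <;> simp [etaM, etaBlock]; omega
  · fin_cases i <;> simp [etaM, etaBlock]; omega
  · fin_cases i <;> fin_cases j <;> simp [etaM, etaBlock]

theorem transpose_zetaC (n : ℕ) : (zetaC n)ᵀ = -zetaC n := by
  ext i j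
  simp only [zetaC, transpose_apply, Matrix.neg_apply, of_apply]
  split_ifs <;> grind

-- `zetaC (n + 1)` and `zetaBig n` are the same matrix by definition.
theorem zetaC_mul_self : ∀ n, zetaC n * zetaC n = -1
  | 0 => by ext i; exact i.elim0
  | n + 1 => by
    change zetaBig n * zetaBig n = -1
    apply (reindexAlgEquiv ℝ ℝ finSumFinEquiv.symm).injective
    rw [map_mul, map_neg, map_one, coe_reindexAlgEquiv, reindex_zetaBig,
      zetaBlock_mul_self (zetaC_mul_self n)]

theorem isUnit_zetaC (n : ℕ) : IsUnit (zetaC n) :=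
  (isUnit_iff_isUnit_det _).2 <| isUnit_det_of_right_inverse (B := -zetaC n) <| by
    rw [mul_neg, zetaC_mul_self, neg_neg]

theorem statement5_general (n : ℕ) (S : Matrix (Fin (2*n)) (Fin (2*n)) ℝ)
    (hS : Sᵀ * zetaC n * S = zetaC n) (w : Fin (2*n) → ℝ) (r : ℝ) :
    IsUnit (GamO n S w r) ∧
    (GamO n S w r)ᵀ * zetaBig n * GamO n S w r = zetaBig n ∧
    (GamO n S w r)ᵀ * etaM n * GamO n S w r = etaM n := by
  have hζ : (GamO n S w r)ᵀ * zetaBig n * GamO n S w r = zetaBig n := by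
    rw [← transpose_reindex_mul_mul_eq_iff finSumFinEquiv.symm, reindex_GamO, reindex_zetaBig]
    exact transpose_gammaBlock_mul_zetaBlock_mul (transpose_zetaC n) hS w r
  have hη : (GamO n S w r)ᵀ * etaM n * GamO n S w r = etaM n := by
    rw [← transpose_reindex_mul_mul_eq_iff finSumFinEquiv.symm, reindex_GamO, reindex_etaM]
    exact transpose_gammaBlock_mul_etaBlock_mul _ S w r
  exact ⟨isUnit_of_transpose_mul_mul_eq (isUnit_zetaC (n + 1)) hζ, hζ, hη⟩

theorem statement5 (n : ℕ) (hn : 1 ≤ n) (S : Matrix (Fin (2*n)) (Fin (2*n)) ℝ)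
    (hS : Sᵀ * zetaC n * S = zetaC n) (w : Fin (2*n) → ℝ) (r : ℝ) :
    IsUnit (GamO n S w r) ∧
    (GamO n S w r)ᵀ * zetaBig n * GamO n S w r = zetaBig n ∧
    (GamO n S w r)ᵀ * etaM n * GamO n S w r = etaM n :=
  statement5_general n S hS w r

end
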